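/- Let k be a field and R a commutative integral domain that is a graded k-algebra with grading 𝒜 : ℕ → Submodule k R, 𝒜 0 = k·1. If R is a Hilbert–Serre ring, then the transcendence degree of R over k is at most the Hilbert–Serre dimension: Algebra.trdeg k R ≤ d(R). -/

import Mathlib

/-- The boundedness condition defining Hilbert–Serre rings: for all `t ∈ (0,1)` the
Poincaré series `∑ F n * tⁿ` converges and `(1 - t) ^ d` times its sum is bounded by a
uniform constant `C > 0`. -/
def HSBound (F : ℕ → ℕ) (d : ℕ) : Prop :=
  ∃ C : ℝ, 0 < C ∧ ∀ t : ℝ, t ∈ Set.Ioo (0 : ℝ) 1 →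
    Summable (fun n => (F n : ℝ) * t ^ n) ∧
      (1 - t) ^ d * (∑' n, (F n : ℝ) * t ^ n) ≤ C

/-- A graded algebra with grading `𝒜` is a *Hilbert–Serre ring* if every graded component
is finite dimensional over `k` and the Poincaré series `∑ dim_k (𝒜 n) tⁿ` satisfies the
boundedness condition `HSBound` for some `d`. -/
def IsHilbertSerre {k R : Type*} [Field k] [CommRing R] [Algebra k R]
    (𝒜 : ℕ → Submodule k R) : Prop :=
  (∀ n, FiniteDimensional k (𝒜 n)) ∧
    ∃ d, HSBound (fun n => Module.finrank k (𝒜 n)) d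

/-- The Hilbert–Serre dimension `d(R)`: the least `d` such that `(1-t)^d P_R(t)` is
bounded on `(0,1)`. -/
noncomputable def hsDim {k R : Type*} [Field k] [CommRing R] [Algebra k R]
    (𝒜 : ℕ → Submodule k R) : ℕ :=
  sInf {d | HSBound (fun n => Module.finrank k (𝒜 n)) d}


/-- The transcendence degree of a commutative `k`-algebra `R`: the supremum of the
cardinalities of subsets of `R` that are algebraically independent over `k`. -/
noncomputable def trdeg (k : Type*) (R : Type*) [CommRing k] [CommRing R] [Algebra k R] :
    Cardinal :=
  ⨆ s : {s : Set R // AlgebraicIndependent k ((↑) : s → R)}, Cardinal.mk s.1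


/-! If `x₁, …, x_m` are algebraically independent and all lie in degrees `≤ M`, then the
`(D + 1) ^ m` monomials with exponents `≤ D` are linearly independent and lie in degrees `≤ mDM`,
so the partial sums `∑_{n ≤ N} dim 𝒜 n` grow at least like `N ^ m`. Evaluating the Poincaré
series at `t = 1 - 1 / (2 (N + 1))`, where `t ^ N ≥ 1 / 2` by Bernoulli's inequality, shows that
they grow at most like `N ^ d(R)`. Hence `m ≤ d(R)`. -/

open Module Finset

section Filtration

variable {k R : Type*} [CommSemiring k] [Semiring R] [Algebra k R] (𝒜 : ℕ → Submodule k R)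

def gradedFiltration (N : ℕ) : Submodule k R := ⨆ i ≤ N, 𝒜 i

variable {𝒜}

theorem le_gradedFiltration {i N : ℕ} (h : i ≤ N) : 𝒜 i ≤ gradedFiltration 𝒜 N :=
  le_iSup₂ (f := fun i (_ : i ≤ N) => 𝒜 i) i h

theorem gradedFiltration_mono : Monotone (gradedFiltration 𝒜) :=
  fun _ _ h => iSup₂_le fun _ hi => le_gradedFiltration (hi.trans h)

theorem gradedFiltration_zero : gradedFiltration 𝒜 0 = 𝒜 0 :=
  le_antisymm (iSup₂_le fun i hi => by rw [Nat.le_zero.mp hi]) (le_gradedFiltration le_rfl)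

theorem gradedFiltration_succ (N : ℕ) :
    gradedFiltration 𝒜 (N + 1) = gradedFiltration 𝒜 N ⊔ 𝒜 (N + 1) :=
  Nat.iSup_le_succ 𝒜 N

instance gradedFiltration.gradedMonoid [SetLike.GradedMonoid 𝒜] :
    SetLike.GradedMonoid (gradedFiltration 𝒜) where
  one_mem := le_gradedFiltration le_rfl SetLike.GradedOne.one_mem
  mul_mem p q a b ha hb := by
    have : gradedFiltration 𝒜 p * gradedFiltration 𝒜 q ≤ gradedFiltration 𝒜 (p + q) := by
      simp only [gradedFiltration, Submodule.iSup_mul, Submodule.mul_iSup]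
      exact iSup₂_le fun j hj => iSup₂_le fun i hi =>
        (Submodule.mul_le.2 fun _ ha _ hb => SetLike.mul_mem_graded ha hb).trans
          (le_gradedFiltration (add_le_add hi hj))
    exact this (Submodule.mul_mem_mul ha hb)

theorem exists_forall_mem_gradedFiltration [DirectSum.Decomposition 𝒜] {ι : Type*} [Finite ι]
    (x : ι → R) : ∃ M, ∀ i, x i ∈ gradedFiltration 𝒜 M := by
  have hx (i : ι) : ∃ M, x i ∈ gradedFiltration 𝒜 M := by
    have hmem : x i ∈ ⨆ n, 𝒜 n := by
      rw [(DirectSum.Decomposition.isInternal 𝒜).submodule_iSup_eq_top]; trivial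
    obtain ⟨s, hs⟩ := Submodule.mem_iSup_iff_exists_finset.1 hmem
    have hs_le : ⨆ j ∈ s, 𝒜 j ≤ gradedFiltration 𝒜 (s.sup id) :=
      iSup₂_le fun j hj => le_gradedFiltration (le_sup (f := id) hj)
    exact ⟨s.sup id, hs_le hs⟩
  choose M hM using hx
  have := Fintype.ofFinite ι
  exact ⟨univ.sup M, fun i => gradedFiltration_mono (le_sup (mem_univ i)) (hM i)⟩

end Filtration

section Finrank

variable {k R : Type*} [Field k] [Ring R] [Algebra k R] {𝒜 : ℕ → Submodule k R}
  [∀ n, FiniteDimensional k (𝒜 n)]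

instance gradedFiltration.finiteDimensional (N : ℕ) :
    FiniteDimensional k (gradedFiltration 𝒜 N) := by
  induction N with
  | zero => rw [gradedFiltration_zero]; infer_instance
  | succ N ih => rw [gradedFiltration_succ]; infer_instance

theorem finrank_gradedFiltration_le (N : ℕ) :
    finrank k (gradedFiltration 𝒜 N) ≤ ∑ n ∈ range (N + 1), finrank k (𝒜 n) := by
  induction N with
  | zero => rw [gradedFiltration_zero]; simp
  | succ N ih =>
    rw [gradedFiltration_succ, sum_range_succ]
    exact (Submodule.finrank_add_le_finrank_add_finrank _ _).trans (by omega)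

end Finrank

theorem AlgebraicIndependent.linearIndependent_prod_pow {k R ι : Type*} [CommRing k]
    [CommRing R] [Algebra k R] [Fintype ι] {x : ι → R} (hx : AlgebraicIndependent k x) :
    LinearIndependent k (fun e : ι → ℕ => ∏ i, x i ^ e i) := by
  have : LinearIndependent k fun α => MvPolynomial.aeval x (MvPolynomial.monomial α (1 : k)) :=
    (MvPolynomial.basisMonomials ι k).linearIndependent.map'
      (MvPolynomial.aeval x).toLinearMap (LinearMap.ker_eq_bot.2 hx)
  convert this.comp _ Finsupp.equivFunOnFinite.symm.injective using 1
  funext e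
  simp [MvPolynomial.aeval_monomial, Finsupp.prod_fintype]

theorem AlgebraicIndependent.pow_card_le_finrank_gradedFiltration {k R ι : Type*} [Field k]
    [CommRing R] [Algebra k R] {𝒜 : ℕ → Submodule k R} [SetLike.GradedMonoid 𝒜]
    [∀ n, FiniteDimensional k (𝒜 n)] [Fintype ι] {x : ι → R} (hx : AlgebraicIndependent k x)
    {M : ℕ} (hxM : ∀ i, x i ∈ gradedFiltration 𝒜 M) (D : ℕ) :
    (D + 1) ^ Fintype.card ι ≤ finrank k (gradedFiltration 𝒜 (Fintype.card ι * D * M)) := by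
  classical
  set F := gradedFiltration 𝒜 (Fintype.card ι * D * M)
  have hmem (e : ι → Fin (D + 1)) : ∏ i, x i ^ (e i : ℕ) ∈ F := by
    refine gradedFiltration_mono ?_
      (SetLike.prod_pow_mem_graded _ (fun _ => M) x _ fun i _ => hxM i)
    calc ∑ i, (e i : ℕ) • M ≤ ∑ _i : ι, D * M :=
          sum_le_sum fun i _ => Nat.mul_le_mul_right M (Nat.le_of_lt_succ (e i).isLt)
      _ = Fintype.card ι * D * M := by simp [mul_assoc]
  have hli : LinearIndependent k (fun e : ι → Fin (D + 1) => (⟨_, hmem e⟩ : F)) :=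
    LinearIndependent.of_comp F.subtype <|
      hx.linearIndependent_prod_pow.comp _ Fin.val_injective.comp_left
  simpa using hli.fintype_card_le_finrank

theorem HSBound.sum_range_le {F : ℕ → ℕ} {d : ℕ} (h : HSBound F d) :
    ∃ K : ℝ, ∀ N : ℕ, ∑ n ∈ range (N + 1), (F n : ℝ) ≤ K * ((N : ℝ) + 1) ^ d := by
  obtain ⟨C, -, hC⟩ := h
  refine ⟨2 ^ (d + 1) * C, fun N => ?_⟩
  set u : ℝ := (2 * ((N : ℝ) + 1))⁻¹
  have hu : 0 < u := by positivity
  have hinv : 2 * ((N : ℝ) + 1) * u = 1 := mul_inv_cancel₀ (by positivity)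
  have hNu : N * u + u = 1 / 2 := by linarith
  have hu2 : u ≤ 1 / 2 := by nlinarith [N.cast_nonneg (α := ℝ)]
  obtain ⟨hsum, hbound⟩ := hC (1 - u) ⟨by linarith, by linarith⟩
  rw [sub_sub_cancel] at hbound
  have hpow : 1 / 2 ≤ (1 - u) ^ N := by
    have := one_add_mul_le_pow (a := -u) (by linarith) N
    rw [← sub_eq_add_neg] at this
    linarith
  set S := ∑ n ∈ range (N + 1), (F n : ℝ)
  set P := ∑' n, (F n : ℝ) * (1 - u) ^ n
  have hSP : S * (1 - u) ^ N ≤ P := by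
    rw [sum_mul]
    refine (sum_le_sum fun n hn => ?_).trans (hsum.sum_le_tsum _ fun n _ =>
      mul_nonneg (Nat.cast_nonneg _) (pow_nonneg (by linarith) _))
    exact mul_le_mul_of_nonneg_left
      (pow_le_pow_of_le_one (by linarith) (by linarith) (mem_range_succ_iff.1 hn)) (by positivity)
  have hS : 0 ≤ S := sum_nonneg fun n _ => by positivity
  calc S ≤ 2 * (S * (1 - u) ^ N) := by nlinarith
    _ ≤ 2 * P := by linarith
    _ = 2 * (2 * ((N : ℝ) + 1) * u) ^ d * P := by rw [hinv, one_pow, mul_one]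
    _ = 2 * (2 * ((N : ℝ) + 1)) ^ d * (u ^ d * P) := by rw [mul_pow]; ring
    _ ≤ 2 * (2 * ((N : ℝ) + 1)) ^ d * C := by gcongr
    _ = 2 ^ (d + 1) * C * ((N : ℝ) + 1) ^ d := by rw [mul_pow, pow_succ]; ring

theorem le_of_forall_pow_le_mul_pow {m d : ℕ} {K : ℝ}
    (h : ∀ D : ℕ, ((D : ℝ) + 1) ^ m ≤ K * ((D : ℝ) + 1) ^ d) : m ≤ d := by
  by_contra! hdm
  obtain ⟨D, hD⟩ := exists_nat_gt K
  have hpos : (0 : ℝ) < ((D : ℝ) + 1) ^ d := by positivity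
  have : ((D : ℝ) + 1) * ((D : ℝ) + 1) ^ d ≤ K * ((D : ℝ) + 1) ^ d :=
    calc ((D : ℝ) + 1) * ((D : ℝ) + 1) ^ d = ((D : ℝ) + 1) ^ (d + 1) := by ring
      _ ≤ ((D : ℝ) + 1) ^ m := pow_le_pow_right₀ (by linarith [D.cast_nonneg (α := ℝ)]) hdm
      _ ≤ K * ((D : ℝ) + 1) ^ d := h D
  linarith [le_of_mul_le_mul_right this hpos]

theorem AlgebraicIndependent.card_le_of_sum_finrank_le {k R ι : Type*} [Field k] [CommRing R]
    [Algebra k R] {𝒜 : ℕ → Submodule k R} [SetLike.GradedMonoid 𝒜] [DirectSum.Decomposition 𝒜]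
    [∀ n, FiniteDimensional k (𝒜 n)] {d : ℕ} {K : ℝ}
    (hK : ∀ N : ℕ, ∑ n ∈ range (N + 1), (finrank k (𝒜 n) : ℝ) ≤ K * ((N : ℝ) + 1) ^ d)
    [Fintype ι] {x : ι → R} (hx : AlgebraicIndependent k x) : Fintype.card ι ≤ d := by
  obtain ⟨M, hxM⟩ := exists_forall_mem_gradedFiltration (𝒜 := 𝒜) x
  set m := Fintype.card ι
  have hK0 : 0 ≤ K := by simpa using (sum_nonneg fun n _ => Nat.cast_nonneg _).trans (hK 0)
  refine le_of_forall_pow_le_mul_pow (K := K * ((m * M : ℕ) + 1 : ℝ) ^ d) fun D => ?_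
  have hcount : (D + 1) ^ m ≤ ∑ n ∈ range (m * D * M + 1), finrank k (𝒜 n) :=
    (hx.pow_card_le_finrank_gradedFiltration hxM D).trans (finrank_gradedFiltration_le _)
  have hN : ((m * D * M : ℕ) : ℝ) + 1 ≤ ((m * M : ℕ) + 1 : ℝ) * ((D : ℝ) + 1) := by
    push_cast; nlinarith [(m * M : ℕ).cast_nonneg (α := ℝ)]
  calc ((D : ℝ) + 1) ^ m = ((D + 1) ^ m : ℕ) := by push_cast; rfl
    _ ≤ ∑ n ∈ range (m * D * M + 1), (finrank k (𝒜 n) : ℝ) := by exact_mod_cast hcount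
    _ ≤ K * (((m * D * M : ℕ) : ℝ) + 1) ^ d := hK _
    _ ≤ K * (((m * M : ℕ) + 1 : ℝ) * ((D : ℝ) + 1)) ^ d := by gcongr
    _ = K * ((m * M : ℕ) + 1 : ℝ) ^ d * ((D : ℝ) + 1) ^ d := by rw [mul_pow, mul_assoc]

theorem trdeg_le_of_forall_not_algebraicIndependent {k R : Type*} [CommRing k] [CommRing R]
    [Algebra k R] {d : ℕ} (h : ∀ x : Fin (d + 1) → R, ¬AlgebraicIndependent k x) :
    trdeg k R ≤ d := by
  refine ciSup_le' fun ⟨s, hs⟩ => ?_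
  by_contra! hlt
  obtain ⟨f⟩ := Cardinal.lift_mk_le'.1 (by simpa using Cardinal.add_one_le_of_lt hlt :
    Cardinal.lift.{_, 0} (Cardinal.mk (Fin (d + 1))) ≤ Cardinal.lift (Cardinal.mk s))
  exact h _ (hs.comp f f.injective)

theorem trdeg_le_hsDim_general {k R : Type*} [Field k] [CommRing R] [Algebra k R]
    (𝒜 : ℕ → Submodule k R) [GradedAlgebra 𝒜]
    (hHS : IsHilbertSerre 𝒜) :
    trdeg k R ≤ (hsDim 𝒜 : Cardinal) := by
  obtain ⟨hfin, hbound⟩ := hHS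
  have hHSDim : HSBound _ (hsDim 𝒜) := Nat.sInf_mem hbound
  obtain ⟨K, hK⟩ := hHSDim.sum_range_le
  refine trdeg_le_of_forall_not_algebraicIndependent fun x hx => ?_
  simpa using hx.card_le_of_sum_finrank_le hK

/-- for a Hilbert–Serre domain `R`, the transcendence degree of `R` over
`k` is at most the Hilbert–Serre dimension `d(R)`. -/
theorem trdeg_le_hsDim {k R : Type*} [Field k] [CommRing R] [IsDomain R] [Algebra k R]
    (𝒜 : ℕ → Submodule k R) [GradedAlgebra 𝒜] (h0 : 𝒜 0 = 1)
    (hHS : IsHilbertSerre 𝒜) :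
    trdeg k R ≤ (hsDim 𝒜 : Cardinal) :=
  trdeg_le_hsDim_general 𝒜 hHS
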